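/- Let S be a finite nonempty type, μ : PMF S, and let P, P' : S → PMF S be two transition kernels such that TV(P s, P' s) ≤ α for every s ∈ S. Then for every natural number t, the t-step state distributions satisfy TV(μ_t^P, μ_t^{P'}) ≤ t·α. -/

import Mathlib

open scoped ENNReal

/-- The `t`-fold bind iterate of an initial distribution `μ` under transition kernel `P`:
`μ_0 = μ`, `μ_{t+1} = μ_t.bind P`. -/
noncomputable def stepDist {S : Type*} (P : S → PMF S) (μ : PMF S) : ℕ → PMF S
  | 0 => μ
  | (t + 1) => (stepDist P μ t).bind P

/-- Total variation distance `TV(p, q) = (1/2) ∑_s |p s − q s|` on a finite type. -/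
noncomputable def tvDist {S : Type*} [Fintype S] (p q : PMF S) : ℝ :=
  (1 / 2) * ∑ s, |(p s).toReal - (q s).toReal|

/-!
Let `μ_t`, `μ'_t` be the iterates under `P`, `P'`, and compare `μ_t P` with `μ'_t P'` through
`μ'_t P`. The first step costs at most `TV(μ_t, μ'_t)`, since pushing two distributions through
the same kernel cannot increase their distance, and the second at most `α`, being an average over
`μ'_t` of the kernel errors `TV(P a, P' a)`. So each step adds at most `α`.
-/

namespace PMF

variable {S : Type*} [Fintype S]

lemma sum_toReal (p : PMF S) : ∑ s, (p s).toReal = 1 := by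
  rw [← ENNReal.toReal_sum fun a _ => p.apply_ne_top a, ← tsum_fintype (L := .unconditional _),
    p.tsum_coe, ENNReal.toReal_one]

lemma bind_apply_toReal (ν : PMF S) (P : S → PMF S) (s : S) :
    ((ν.bind P) s).toReal = ∑ a, (ν a).toReal * (P a s).toReal := by
  rw [bind_apply, tsum_fintype,
    ENNReal.toReal_sum fun a _ => ENNReal.mul_ne_top (ν.apply_ne_top a) ((P a).apply_ne_top s)]
  simp only [ENNReal.toReal_mul]

end PMF

lemma Finset.sum_abs_sum_mul_le {ι κ : Type*} (s : Finset ι) (u : Finset κ) (c : κ → ℝ)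
    (f : κ → ι → ℝ) :
    ∑ i ∈ s, |∑ a ∈ u, c a * f a i| ≤ ∑ a ∈ u, |c a| * ∑ i ∈ s, |f a i| :=
  calc ∑ i ∈ s, |∑ a ∈ u, c a * f a i|
      ≤ ∑ i ∈ s, ∑ a ∈ u, |c a| * |f a i| :=
        sum_le_sum fun i _ => (abs_sum_le_sum_abs _ _).trans_eq (by simp only [abs_mul])
    _ = ∑ a ∈ u, |c a| * ∑ i ∈ s, |f a i| := by rw [sum_comm]; simp only [mul_sum]

section tvDist

variable {S : Type*} [Fintype S]

lemma tvDist_triangle (p q r : PMF S) : tvDist p r ≤ tvDist p q + tvDist q r := by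
  unfold tvDist
  rw [← mul_add, ← Finset.sum_add_distrib]
  gcongr with s
  exact abs_sub_le _ _ _

lemma tvDist_bind_le (ν ν' : PMF S) (P : S → PMF S) :
    tvDist (ν.bind P) (ν'.bind P) ≤ tvDist ν ν' := by
  unfold tvDist
  refine mul_le_mul_of_nonneg_left ?_ (by norm_num)
  calc ∑ s, |((ν.bind P) s).toReal - ((ν'.bind P) s).toReal|
      = ∑ s, |∑ a, ((ν a).toReal - (ν' a).toReal) * (P a s).toReal| := by
        simp only [PMF.bind_apply_toReal, ← Finset.sum_sub_distrib, sub_mul]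
    _ ≤ ∑ a, |(ν a).toReal - (ν' a).toReal| * ∑ s, |(P a s).toReal| :=
        Finset.sum_abs_sum_mul_le _ _ _ _
    _ = ∑ a, |(ν a).toReal - (ν' a).toReal| := by
        simp only [abs_of_nonneg ENNReal.toReal_nonneg, PMF.sum_toReal, mul_one]

lemma tvDist_bind_bind_le (ν : PMF S) (P P' : S → PMF S) :
    tvDist (ν.bind P) (ν.bind P') ≤ ∑ a, (ν a).toReal * tvDist (P a) (P' a) := by
  unfold tvDist
  calc 1 / 2 * ∑ s, |((ν.bind P) s).toReal - ((ν.bind P') s).toReal|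
      = 1 / 2 * ∑ s, |∑ a, (ν a).toReal * ((P a s).toReal - (P' a s).toReal)| := by
        simp only [PMF.bind_apply_toReal, ← Finset.sum_sub_distrib, mul_sub]
    _ ≤ 1 / 2 * ∑ a, |(ν a).toReal| * ∑ s, |(P a s).toReal - (P' a s).toReal| := by
        gcongr _ * ?_
        exact Finset.sum_abs_sum_mul_le _ _ _ _
    _ = ∑ a, (ν a).toReal * (1 / 2 * ∑ s, |(P a s).toReal - (P' a s).toReal|) := by
        simp only [abs_of_nonneg ENNReal.toReal_nonneg, Finset.mul_sum]
        ring_nf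

lemma tvDist_bind_bind_le_of_forall_le (ν : PMF S) {P P' : S → PMF S} {α : ℝ}
    (hPP' : ∀ a, tvDist (P a) (P' a) ≤ α) : tvDist (ν.bind P) (ν.bind P') ≤ α :=
  calc tvDist (ν.bind P) (ν.bind P')
      ≤ ∑ a, (ν a).toReal * tvDist (P a) (P' a) := tvDist_bind_bind_le ν P P'
    _ ≤ ∑ a, (ν a).toReal * α := by gcongr with a; exact hPP' a
    _ = α := by rw [← Finset.sum_mul, PMF.sum_toReal, one_mul]

end tvDist

theorem tv_error_accumulation_general {S : Type*} [Fintype S]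
    (μ : PMF S) (P P' : S → PMF S) (α : ℝ)
    (hTV : ∀ s, tvDist (P s) (P' s) ≤ α) (t : ℕ) :
    tvDist (stepDist P μ t) (stepDist P' μ t) ≤ t * α := by
  induction t with
  | zero => simp [tvDist, stepDist]
  | succ t ih =>
    calc tvDist (stepDist P μ (t + 1)) (stepDist P' μ (t + 1))
        ≤ tvDist ((stepDist P μ t).bind P) ((stepDist P' μ t).bind P)
          + tvDist ((stepDist P' μ t).bind P) ((stepDist P' μ t).bind P') :=
          tvDist_triangle _ _ _
      _ ≤ t * α + α :=
          add_le_add ((tvDist_bind_le _ _ P).trans ih) (tvDist_bind_bind_le_of_forall_le _ hTV)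
      _ = (t + 1 : ℕ) * α := by push_cast; ring

/-- Error-accumulation lemma: if the two kernels are `α`-close in total variation at every
state, then the `t`-step state distributions are `t·α`-close in total variation. -/
theorem tv_error_accumulation {S : Type*} [Fintype S] [Nonempty S]
    (μ : PMF S) (P P' : S → PMF S) (α : ℝ)
    (hTV : ∀ s, tvDist (P s) (P' s) ≤ α) (t : ℕ) :
    tvDist (stepDist P μ t) (stepDist P' μ t) ≤ t * α :=
  tv_error_accumulation_general μ P P' α hTV t
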